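/- Let f : ℝ⁴ → ℝ be given by f(x,u,p,q) = (6p/u + 3/x)·q − 6p³/u² − 6p²/(x·u) − 6p/x² − 6u/x³ on the open set where x ≠ 0 and u ≠ 0. Then the functions a₁(x,u,p) = 1/(x·u²), a₂(x,u,p) = −2p/(x·u³) − 1/(x²·u²), a₃(x,u,p) = 1/(x·u²) satisfy on this set the auxiliary system: D_x a₃ = −(1/3) f_q a₃, D_x a₂ = (1/2)(a₂²/a₃) − (1/18) a₃ (2 f_q² + 9 f_p − 3 D_x f_q), and D_x a₁ = (a₂/a₃) a₁. -/

import Mathlib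

/-- Partial derivative with respect to the hDa3 variable `x`. -/
noncomputable def pX (g : ℝ → ℝ → ℝ → ℝ → ℝ) (x u p q : ℝ) : ℝ :=
  deriv (fun t => g t u p q) x

/-- Partial derivative with respect to the second variable `u`. -/
noncomputable def pU (g : ℝ → ℝ → ℝ → ℝ → ℝ) (x u p q : ℝ) : ℝ :=
  deriv (fun t => g x t p q) u

/-- Partial derivative with respect to the third variable `p`. -/
noncomputable def pP (g : ℝ → ℝ → ℝ → ℝ → ℝ) (x u p q : ℝ) : ℝ :=
  deriv (fun t => g x u t q) p

/-- Partial derivative with respect to the fourth variable `q`. -/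
noncomputable def pQ (g : ℝ → ℝ → ℝ → ℝ → ℝ) (x u p q : ℝ) : ℝ :=
  deriv (fun t => g x u p t) q

/-- The total derivative operator
`D_x = ∂/∂x + p ∂/∂u + q ∂/∂p + f ∂/∂q` associated with the ODE `u''' = f`. -/
noncomputable def Dx (f g : ℝ → ℝ → ℝ → ℝ → ℝ) : ℝ → ℝ → ℝ → ℝ → ℝ :=
  fun x u p q =>
    pX g x u p q + p * pU g x u p q + q * pP g x u p q + f x u p q * pQ g x u p q

/-- The right hand side of the nonlinear ODE of Example 3.1:
`u''' = (6u'/u + 3/x)u'' − 6u'³/u² − 6u'²/(xu) − 6u'/x² − 6u/x³`. -/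
noncomputable def f : ℝ → ℝ → ℝ → ℝ → ℝ := fun x u p q =>
  (6 * p / u + 3 / x) * q - 6 * p ^ 3 / u ^ 2 - 6 * p ^ 2 / (x * u)
    - 6 * p / x ^ 2 - 6 * u / x ^ 3

/-- Auxiliary function `a₁(x,u,p) = 1/(xu²)` (viewed as a function of `(x,u,p,q)`). -/
noncomputable def a1 : ℝ → ℝ → ℝ → ℝ → ℝ := fun x u _p _q => 1 / (x * u ^ 2)

/-- Auxiliary function `a₂(x,u,p) = −2p/(xu³) − 1/(x²u²)`. -/
noncomputable def a2 : ℝ → ℝ → ℝ → ℝ → ℝ := fun x u p _q =>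
  -(2 * p) / (x * u ^ 3) - 1 / (x ^ 2 * u ^ 2)

/-- Auxiliary function `a₃(x,u,p) = 1/(xu²)`. -/
noncomputable def a3 : ℝ → ℝ → ℝ → ℝ → ℝ := fun x u _p _q => 1 / (x * u ^ 2)

/-! All three equations come from computing partial derivatives of rational functions. Since
`a₁ = a₃` and `a₂ = -(1/3) f_q a₃`, the third equation is the hDa3 one rewritten. -/

theorem Dx_eq_of_hasDerivAt {F g : ℝ → ℝ → ℝ → ℝ → ℝ} {x u p q gx gu gp gq : ℝ}
    (hx : HasDerivAt (fun t => g t u p q) gx x) (hu : HasDerivAt (fun t => g x t p q) gu u)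
    (hp : HasDerivAt (fun t => g x u t q) gp p) (hq : HasDerivAt (fun t => g x u p t) gq q) :
    Dx F g x u p q = gx + p * gu + q * gp + F x u p q * gq := by
  rw [Dx, pX, pU, pP, pQ, hx.deriv, hu.deriv, hp.deriv, hq.deriv]

section Example

variable {x u p q : ℝ}

theorem pQ_f : pQ f = fun x u p _ => 6 * p / u + 3 / x := by
  funext x u p q
  refine HasDerivAt.deriv ?_
  unfold f
  simpa using (((((hasDerivAt_id q).const_mul (6 * p / u + 3 / x)).sub_const (6 * p ^ 3 / u ^ 2))
    |>.sub_const (6 * p ^ 2 / (x * u))).sub_const (6 * p / x ^ 2)).sub_const (6 * u / x ^ 3)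

theorem pP_f : pP f x u p q = 6 * q / u - 18 * p ^ 2 / u ^ 2 - 12 * p / (x * u) - 6 / x ^ 2 := by
  refine HasDerivAt.deriv ?_
  refine ((((((((hasDerivAt_id p).const_mul 6).div_const u).add_const (3 / x)).mul_const q).sub
    (((hasDerivAt_pow 3 p).const_mul 6).div_const (u ^ 2))).sub
    (((hasDerivAt_pow 2 p).const_mul 6).div_const (x * u))).sub
    (((hasDerivAt_id p).const_mul 6).div_const (x ^ 2))).sub_const (6 * u / x ^ 3) |>.congr_deriv ?_
  push_cast
  ring

theorem a1_eq_a3 : a1 = a3 := by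
  unfold a1 a3
  rfl

theorem a2_eq (hx : x ≠ 0) (hu : u ≠ 0) : a2 x u p q = -(1 / 3) * pQ f x u p q * a3 x u p q := by
  simp only [a2, a3, pQ_f]
  field_simp
  ring

variable {F : ℝ → ℝ → ℝ → ℝ → ℝ}

theorem Dx_a3 (hx : x ≠ 0) (hu : u ≠ 0) :
    Dx F a3 x u p q = -(1 / (x ^ 2 * u ^ 2)) - 2 * p / (x * u ^ 3) := by
  have dx : HasDerivAt (fun t => a3 t u p q) (-(1 / (x ^ 2 * u ^ 2))) x :=
    (hasDerivAt_const x 1).div ((hasDerivAt_id' x).mul_const (u ^ 2))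
      (mul_ne_zero hx (pow_ne_zero 2 hu)) |>.congr_deriv (by field_simp; ring)
  have du : HasDerivAt (fun t => a3 x t p q) (-(2 / (x * u ^ 3))) u :=
    (hasDerivAt_const u 1).div ((hasDerivAt_pow 2 u).const_mul x)
      (mul_ne_zero hx (pow_ne_zero 2 hu)) |>.congr_deriv (by field_simp; ring)
  rw [Dx_eq_of_hasDerivAt dx du (hasDerivAt_const p _) (hasDerivAt_const q _)]
  ring

theorem Dx_a2 (hx : x ≠ 0) (hu : u ≠ 0) :
    Dx F a2 x u p q = 2 * p / (x ^ 2 * u ^ 3) + 2 / (x ^ 3 * u ^ 2)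
      + p * (6 * p / (x * u ^ 4) + 2 / (x ^ 2 * u ^ 3)) - 2 * q / (x * u ^ 3) := by
  have dx : HasDerivAt (fun t => a2 t u p q) (2 * p / (x ^ 2 * u ^ 3) + 2 / (x ^ 3 * u ^ 2)) x :=
    ((hasDerivAt_const x (-(2 * p))).div ((hasDerivAt_id' x).mul_const (u ^ 3))
      (mul_ne_zero hx (pow_ne_zero 3 hu))).sub
      ((hasDerivAt_const x 1).div ((hasDerivAt_pow 2 x).mul_const (u ^ 2))
      (mul_ne_zero (pow_ne_zero 2 hx) (pow_ne_zero 2 hu))) |>.congr_deriv (by field_simp; ring)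
  have du : HasDerivAt (fun t => a2 x t p q) (6 * p / (x * u ^ 4) + 2 / (x ^ 2 * u ^ 3)) u :=
    ((hasDerivAt_const u (-(2 * p))).div ((hasDerivAt_pow 3 u).const_mul x)
      (mul_ne_zero hx (pow_ne_zero 3 hu))).sub
      ((hasDerivAt_const u 1).div ((hasDerivAt_pow 2 u).const_mul (x ^ 2))
      (mul_ne_zero (pow_ne_zero 2 hx) (pow_ne_zero 2 hu))) |>.congr_deriv (by field_simp; ring)
  have dp : HasDerivAt (fun t => a2 x u t q) (-(2 / (x * u ^ 3))) p :=
    (((hasDerivAt_id p).const_mul 2).neg.div_const (x * u ^ 3)).sub_const (1 / (x ^ 2 * u ^ 2))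
      |>.congr_deriv (by ring)
  rw [Dx_eq_of_hasDerivAt dx du dp (hasDerivAt_const q _)]
  ring

theorem Dx_pQ_f (hx : x ≠ 0) (hu : u ≠ 0) :
    Dx F (pQ f) x u p q = -(3 / x ^ 2) - 6 * p ^ 2 / u ^ 2 + 6 * q / u := by
  have dx : HasDerivAt (fun t => pQ f t u p q) (-(3 / x ^ 2)) x := by
    simp only [pQ_f]
    exact ((hasDerivAt_const x 3).div (hasDerivAt_id' x) hx).const_add (6 * p / u)
      |>.congr_deriv (by field_simp; ring)
  have du : HasDerivAt (fun t => pQ f x t p q) (-(6 * p / u ^ 2)) u := by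
    simp only [pQ_f]
    exact ((hasDerivAt_const u (6 * p)).div (hasDerivAt_id' u) hu).add_const (3 / x)
      |>.congr_deriv (by field_simp; ring)
  have dp : HasDerivAt (fun t => pQ f x u t q) (6 / u) p := by
    simpa [pQ_f] using (((hasDerivAt_id p).const_mul 6).div_const u).add_const (3 / x)
  rw [Dx_eq_of_hasDerivAt dx du dp (by simpa only [pQ_f] using hasDerivAt_const q _)]
  ring

end Example

/-- For `f` of Example 3.1, the functions `a₁, a₂, a₃` satisfy the auxiliary system
`Dₓ a₃ = −(1/3) f_q a₃`, `Dₓ a₂ = (1/2) a₂²/a₃ − (1/18) a₃ (2 f_q² + 9 f_p − 3 Dₓ f_q)`,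
`Dₓ a₁ = (a₂/a₃) a₁` on the set `x ≠ 0`, `u ≠ 0`. -/
theorem auxiliary_system_example1 :
    ∀ x u p q : ℝ, x ≠ 0 → u ≠ 0 →
      Dx f a3 x u p q = -(1 / 3) * pQ f x u p q * a3 x u p q ∧
      Dx f a2 x u p q = (1 / 2) * (a2 x u p q) ^ 2 / a3 x u p q
        - (1 / 18) * a3 x u p q
            * (2 * (pQ f x u p q) ^ 2 + 9 * pP f x u p q - 3 * Dx f (pQ f) x u p q) ∧
      Dx f a1 x u p q = a2 x u p q / a3 x u p q * a1 x u p q := by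
  intro x u p q hx hu
  have ha3 : a3 x u p q ≠ 0 := by simp [a3, hx, hu]
  have hDa3 : Dx f a3 x u p q = -(1 / 3) * pQ f x u p q * a3 x u p q := by
    rw [Dx_a3 hx hu, pQ_f, a3]
    field_simp
    ring
  refine ⟨hDa3, ?_, ?_⟩
  · rw [Dx_a2 hx hu, Dx_pQ_f hx hu, pP_f, pQ_f, a2, a3]
    field_simp
    ring
  · rw [a1_eq_a3, hDa3, a2_eq hx hu, div_mul_cancel₀ _ ha3]
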